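/- arXiv:1406.5685 — 4 statements merged into one kernel-verified Lean document; each statement's English description precedes it below -/
import Mathlib

section
/- Let ν ≥ 1 and h₀,…,h_ν ∈ ℂ with h₀ ≠ 0 and h_ν ≠ 0, let H(ω) = ∑_{ℓ=0}^{ν} h_ℓ e^{-iℓω} satisfy H(ω) ≠ 0 for every ω ∈ [-π,π], let N₀ > 0 and θ ∈ ℝ, and define the waterfilling spectrum S_p(ω) = max(0, θ − N₀/|H(ω)|²). Assume S_p is not identically zero on [-π,π]. If there exist an integer m ≥ 0 and complex constants c_{-m},…,c_m such that S_p(ω)·|H(ω)|² = ∑_{ℓ=-m}^{m} c_ℓ e^{iℓω} for every ω ∈ [-π,π] (i.e., the combined transmit-filter–channel power spectrum is a trigonometric polynomial of degree m, so that the combined memory is ν_C = m), then m ≥ ν. -/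
/-!
Write `z = e^{iω}`. After multiplication by a power of `z`, a trigonometric polynomial of degree
`m` becomes a polynomial of degree `≤ 2m` in `z`, and `|H(ω)|²` becomes a polynomial of degree
`2ν` with leading coefficient `h₀ h̄_ν`. As `ω` runs over an open interval, `z` takes infinitely
many values, so an identity between such expressions on an open interval is an identity of
polynomials.

The combined spectrum is `max(0, θ|H|² − N₀)`. If `θ|H|² ≥ N₀` on `(-π, π)`, it equals
`θ|H|² − N₀` there, whose coefficient `θ h₀ h̄_ν` of `e^{iνω}` is nonzero, so `m ≥ ν`. Otherwise
it vanishes on an open interval, so the trigonometric polynomial vanishes identically,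
contradicting `S_p ≢ 0`.
-/

open scoped BigOperators

/-- Channel frequency response `H(ω) = ∑_{ℓ=0}^{ν} h_ℓ e^{-iℓω}`. -/
noncomputable def freqResp (ν : ℕ) (h : ℕ → ℂ) (ω : ℝ) : ℂ :=
  ∑ ℓ ∈ Finset.range (ν + 1), h ℓ * Complex.exp (-(Complex.I * ℓ * ω))

open Complex ComplexConjugate Polynomial Set

theorem Polynomial.eq_zero_of_eval_exp_mul_I_eq_zero {p : ℂ[X]} {U : Set ℝ} (hU : IsOpen U)
    (hne : U.Nonempty) (hp : ∀ ω ∈ U, p.eval (cexp (ω * I)) = 0) : p = 0 := by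
  obtain ⟨x, hx⟩ := hne
  obtain ⟨ε, hε, hball⟩ := Metric.isOpen_iff.1 hU x hx
  set δ := min (ε / 2) 1
  have hδ : 0 < δ := lt_min (half_pos hε) one_pos
  have hsub : Icc (x - δ) (x + δ) ⊆ U := by
    rw [← Real.closedBall_eq_Icc]
    exact (Metric.closedBall_subset_ball ((min_le_left _ _).trans_lt (half_lt_self hε))).trans
      hball
  have hinj : InjOn (fun ω : ℝ => cexp (ω * I)) (Icc (x - δ) (x + δ)) :=
    Subtype.val_injective.comp_injOn
      (Circle.exp_injOn_Icc (by linarith [min_le_right (ε / 2) 1, Real.pi_gt_three]))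
  refine p.eq_zero_of_infinite_isRoot (((Icc_infinite (by linarith)).image hinj).mono ?_)
  rintro _ ⟨ω, hω, rfl⟩
  exact hp ω (hsub hω)

noncomputable def trigPoly (m : ℕ) (c : ℤ → ℂ) (ω : ℝ) : ℂ :=
  ∑ ℓ ∈ Finset.Icc (-(m : ℤ)) m, c ℓ * cexp (I * ℓ * ω)

namespace trigPoly

variable (m : ℕ) (c : ℤ → ℂ)

noncomputable def toPolynomial : ℂ[X] :=
  ∑ ℓ ∈ Finset.Icc (-(m : ℤ)) m, C (c ℓ) * X ^ (ℓ + m).toNat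

theorem eval_toPolynomial (ω : ℝ) :
    (toPolynomial m c).eval (cexp (ω * I)) = cexp (ω * I) ^ m * trigPoly m c ω := by
  simp only [toPolynomial, trigPoly, eval_finsetSum, Finset.mul_sum, eval_mul, eval_C, eval_pow,
    eval_X]
  refine Finset.sum_congr rfl fun ℓ hℓ => ?_
  have hℓm : 0 ≤ ℓ + m := by linarith [(Finset.mem_Icc.1 hℓ).1]
  have hpow : cexp (ω * I) ^ (ℓ + m).toNat = cexp (ω * I) ^ m * cexp (ω * I) ^ ℓ := by
    rw [← zpow_natCast, Int.toNat_of_nonneg hℓm, zpow_add₀ (exp_ne_zero _), zpow_natCast, mul_comm]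
  rw [hpow, ← exp_int_mul]
  ring_nf

theorem natDegree_toPolynomial_le : (toPolynomial m c).natDegree ≤ 2 * m :=
  natDegree_sum_le_of_forall_le _ _ fun ℓ hℓ =>
    (natDegree_C_mul_X_pow_le _ _).trans (by have := Finset.mem_Icc.1 hℓ; omega)

variable {m c}

theorem eq_zero_of_eqOn_zero {U : Set ℝ} (hU : IsOpen U) (hne : U.Nonempty)
    (hP : EqOn (trigPoly m c) 0 U) : trigPoly m c = 0 := by
  have hQ : toPolynomial m c = 0 := eq_zero_of_eval_exp_mul_I_eq_zero hU hne fun ω hω => by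
    rw [eval_toPolynomial, hP hω, Pi.zero_apply, mul_zero]
  funext ω
  have hω := eval_toPolynomial m c ω
  rw [hQ, eval_zero] at hω
  exact (mul_eq_zero.1 hω.symm).resolve_left (pow_ne_zero _ (exp_ne_zero _))

end trigPoly

namespace freqResp

variable (ν : ℕ) (h : ℕ → ℂ)

@[fun_prop]
theorem continuous : Continuous (freqResp ν h) := by
  unfold freqResp
  fun_prop

noncomputable def reversePoly : ℂ[X] :=
  ∑ k ∈ Finset.range (ν + 1), C (h k) * X ^ (ν - k)

noncomputable def conjPoly : ℂ[X] :=
  ∑ k ∈ Finset.range (ν + 1), C (conj (h k)) * X ^ k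

theorem eval_reversePoly (ω : ℝ) :
    (reversePoly ν h).eval (cexp (ω * I)) = cexp (ω * I) ^ ν * freqResp ν h ω := by
  simp only [reversePoly, freqResp, eval_finsetSum, Finset.mul_sum, eval_mul, eval_C, eval_pow,
    eval_X]
  refine Finset.sum_congr rfl fun k hk => ?_
  have hexp : cexp (-(I * k * ω)) = (cexp (ω * I) ^ k)⁻¹ := by
    rw [exp_neg, ← exp_nat_mul]
    ring_nf
  rw [pow_sub₀ _ (exp_ne_zero _) (Nat.lt_succ_iff.1 (Finset.mem_range.1 hk)), hexp]
  ring

theorem eval_conjPoly (ω : ℝ) :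
    (conjPoly ν h).eval (cexp (ω * I)) = conj (freqResp ν h ω) := by
  simp only [conjPoly, freqResp, eval_finsetSum, map_sum, map_mul, eval_mul, eval_C, eval_pow,
    eval_X, ← exp_conj, ← exp_nat_mul]
  refine Finset.sum_congr rfl fun k _ => ?_
  simp only [map_neg, map_mul, conj_I, conj_ofReal, map_natCast]
  ring_nf

theorem natDegree_reversePoly_le : (reversePoly ν h).natDegree ≤ ν :=
  natDegree_sum_le_of_forall_le _ _ fun _ _ => (natDegree_C_mul_X_pow_le _ _).trans (Nat.sub_le _ _)

theorem natDegree_conjPoly_le : (conjPoly ν h).natDegree ≤ ν :=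
  natDegree_sum_le_of_forall_le _ _ fun _ hk =>
    (natDegree_C_mul_X_pow_le _ _).trans (Nat.lt_succ_iff.1 (Finset.mem_range.1 hk))

theorem coeff_reversePoly_self : (reversePoly ν h).coeff ν = h 0 := by
  simp only [reversePoly, finsetSum_coeff, coeff_C_mul_X_pow]
  rw [Finset.sum_eq_single 0 (fun k hk hk0 => if_neg (by have := Finset.mem_range.1 hk; omega))
    (by simp), if_pos (Nat.sub_zero ν).symm]

theorem coeff_conjPoly_self : (conjPoly ν h).coeff ν = conj (h ν) := by
  simp [conjPoly]

theorem coeff_reversePoly_mul_conjPoly :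
    (reversePoly ν h * conjPoly ν h).coeff (ν + ν) = h 0 * conj (h ν) := by
  rw [coeff_mul_add_eq_of_natDegree_le (natDegree_reversePoly_le ν h) (natDegree_conjPoly_le ν h),
    coeff_reversePoly_self, coeff_conjPoly_self]

end freqResp

open freqResp in
theorem le_of_eqOn_trigPoly_normSq_freqResp {ν m : ℕ} {h : ℕ → ℂ} {c : ℤ → ℂ} {θ N : ℂ}
    {U : Set ℝ} (hU : IsOpen U) (hne : U.Nonempty) (hθ : θ ≠ 0) (h0 : h 0 ≠ 0) (hν : h ν ≠ 0)
    (hP : EqOn (trigPoly m c) (fun ω => θ * normSq (freqResp ν h ω) - N) U) : ν ≤ m := by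
  by_contra! hlt
  have hpoly : X ^ ν * trigPoly.toPolynomial m c =
      C θ * (reversePoly ν h * conjPoly ν h) * X ^ m - C N * X ^ (ν + m) := by
    rw [← sub_eq_zero]
    refine eq_zero_of_eval_exp_mul_I_eq_zero hU hne fun ω hω => ?_
    simp only [eval_sub, eval_mul, eval_pow, eval_X, eval_C, trigPoly.eval_toPolynomial,
      eval_reversePoly, eval_conjPoly, hP hω]
    rw [← mul_conj]
    ring
  have hleft : (X ^ ν * trigPoly.toPolynomial m c).coeff (ν + m + ν) = 0 := by
    rw [coeff_X_pow_mul]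
    exact coeff_eq_zero_of_natDegree_lt ((trigPoly.natDegree_toPolynomial_le m c).trans_lt
      (by omega))
  have hright : (C θ * (reversePoly ν h * conjPoly ν h) * X ^ m - C N * X ^ (ν + m)).coeff
      (ν + m + ν) = θ * (h 0 * conj (h ν)) := by
    rw [coeff_sub, coeff_C_mul_X_pow, if_neg (by omega), sub_zero,
      show ν + m + ν = ν + ν + m by ring, coeff_mul_X_pow, coeff_C_mul,
      coeff_reversePoly_mul_conjPoly]
  rw [← hpoly, hleft] at hright
  exact mul_ne_zero hθ (mul_ne_zero h0 ((_root_.map_ne_zero _).2 hν)) hright.symm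

theorem max_zero_sub_div_mul {θ N q : ℝ} (hq : 0 < q) :
    max 0 (θ - N / q) * q = max 0 (θ * q - N) := by
  rw [max_mul_of_nonneg _ _ hq.le, zero_mul, sub_mul, div_mul_cancel₀ _ hq.ne']

theorem waterfilling_memory_ge_general
    (ν : ℕ) (h : ℕ → ℂ) (h0 : h 0 ≠ 0) (hnu : h ν ≠ 0)
    (hH : ∀ ω ∈ Set.Icc (-Real.pi) Real.pi, freqResp ν h ω ≠ 0)
    (N₀ : ℝ) (hN₀ : 0 < N₀) (θ : ℝ)
    (Sp : ℝ → ℝ)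
    (hSp : ∀ ω : ℝ, Sp ω = max 0 (θ - N₀ / Complex.normSq (freqResp ν h ω)))
    (hSpne : ∃ ω ∈ Set.Icc (-Real.pi) Real.pi, Sp ω ≠ 0)
    (m : ℕ) (c : ℤ → ℂ)
    (hpoly : ∀ ω ∈ Set.Icc (-Real.pi) Real.pi,
      ((Sp ω * Complex.normSq (freqResp ν h ω) : ℝ) : ℂ) =
        ∑ ℓ ∈ Finset.Icc (-(m : ℤ)) (m : ℤ), c ℓ * Complex.exp (Complex.I * ℓ * ω)) :
    ν ≤ m := by
  have hcombined : ∀ ω ∈ Icc (-Real.pi) Real.pi,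
      trigPoly m c ω = ((max 0 (θ * normSq (freqResp ν h ω) - N₀) : ℝ) : ℂ) := fun ω hω => by
    rw [trigPoly, ← hpoly ω hω, hSp, max_zero_sub_div_mul (normSq_pos.2 (hH ω hω))]
  by_cases hwater : ∀ ω ∈ Ioo (-Real.pi) Real.pi, N₀ ≤ θ * normSq (freqResp ν h ω)
  · have hθ : θ ≠ 0 := by
      rintro rfl
      linarith [hwater 0 ⟨neg_lt_zero.2 Real.pi_pos, Real.pi_pos⟩]
    refine le_of_eqOn_trigPoly_normSq_freqResp (c := c) (N := N₀) isOpen_Ioo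
      (nonempty_Ioo.2 (neg_lt_self Real.pi_pos)) (ofReal_ne_zero.2 hθ) h0 hnu fun ω hω => ?_
    rw [hcombined ω (Ioo_subset_Icc_self hω), max_eq_right (sub_nonneg.2 (hwater ω hω))]
    push_cast
    rfl
  · push Not at hwater
    obtain ⟨ω₀, hω₀, hdry⟩ := hwater
    have hopen : IsOpen ({ω | θ * normSq (freqResp ν h ω) < N₀} ∩ Ioo (-Real.pi) Real.pi) :=
      (isOpen_lt (by fun_prop) continuous_const).inter isOpen_Ioo
    have hzero := trigPoly.eq_zero_of_eqOn_zero hopen ⟨ω₀, hdry, hω₀⟩ fun ω ⟨hω, hω'⟩ => by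
      rw [hcombined ω (Ioo_subset_Icc_self hω'), max_eq_left (sub_nonpos.2 hω.le)]
      simp
    obtain ⟨ω₁, hω₁, hSp₁⟩ := hSpne
    have h₁ := hpoly ω₁ hω₁
    rw [← trigPoly, hzero, Pi.zero_apply, ofReal_eq_zero, mul_eq_zero] at h₁
    exact (hSp₁ (h₁.resolve_right (normSq_pos.2 (hH ω₁ hω₁)).ne')).elim

/-- If the waterfilling spectrum `S_p(ω) = max(0, θ − N₀/|H(ω)|²)`
is not identically zero and the combined power spectrum `S_p(ω)|H(ω)|²` is a
trigonometric polynomial of degree `m` (combined memory `ν_C = m`), then `m ≥ ν`. -/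
theorem waterfilling_memory_ge
    (ν : ℕ) (hν : 1 ≤ ν) (h : ℕ → ℂ) (h0 : h 0 ≠ 0) (hnu : h ν ≠ 0)
    (hH : ∀ ω ∈ Set.Icc (-Real.pi) Real.pi, freqResp ν h ω ≠ 0)
    (N₀ : ℝ) (hN₀ : 0 < N₀) (θ : ℝ)
    (Sp : ℝ → ℝ)
    (hSp : ∀ ω : ℝ, Sp ω = max 0 (θ - N₀ / Complex.normSq (freqResp ν h ω)))
    (hSpne : ∃ ω ∈ Set.Icc (-Real.pi) Real.pi, Sp ω ≠ 0)
    (m : ℕ) (c : ℤ → ℂ)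
    (hpoly : ∀ ω ∈ Set.Icc (-Real.pi) Real.pi,
      ((Sp ω * Complex.normSq (freqResp ν h ω) : ℝ) : ℂ) =
        ∑ ℓ ∈ Finset.Icc (-(m : ℤ)) (m : ℤ), c ℓ * Complex.exp (Complex.I * ℓ * ω)) :
    ν ≤ m :=
  waterfilling_memory_ge_general ν h h0 hnu hH N₀ hN₀ θ Sp hSp hSpne m c hpoly
end

section
/- Let K ≥ 1 and let C be a K×K Hermitian positive definite complex matrix. Then for every invertible K×K complex matrix U, log det(U†U) − Tr(U C U†) ≤ −log det(C) − K, with equality if and only if U†U = C⁻¹. (Here det(U†U) = |det U|² and Tr(U C U†) are positive reals, so both sides are real.) -/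
/-! With `B = U C U†`, positive definite since `U` is invertible, `det B = det (U†U) · det C` and
`Tr B = Tr (U C U†)`, so the claim becomes `log det B - Tr B ≤ -K` with equality iff `B = 1`
(and `U C U† = 1 ↔ U†U = C⁻¹`). In terms of the eigenvalues `λᵢ > 0` of `B` the left side is
`∑ (log λᵢ - λᵢ)`, and `log x - x ≤ -1` with equality only at `x = 1`. -/

open Matrix
open scoped BigOperators ComplexOrder

theorem Real.log_sub_self_le_neg_one {x : ℝ} (hx : 0 < x) : Real.log x - x ≤ -1 := by
  linarith [Real.log_le_sub_one_of_pos hx]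

theorem Real.log_sub_self_eq_neg_one_iff {x : ℝ} (hx : 0 < x) :
    Real.log x - x = -1 ↔ x = 1 := by
  refine ⟨fun h => ?_, fun h => by simp [h]⟩
  by_contra hne
  linarith [Real.log_lt_sub_one_of_pos hx hne]

section

variable {ι : Type*} [Fintype ι] {f : ι → ℝ}

theorem Real.sum_log_sub_self_le (hf : ∀ i, 0 < f i) :
    ∑ i, (Real.log (f i) - f i) ≤ -Fintype.card ι :=
  calc ∑ i, (Real.log (f i) - f i) ≤ ∑ _i : ι, (-1 : ℝ) :=
        Finset.sum_le_sum fun i _ => Real.log_sub_self_le_neg_one (hf i)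
    _ = -Fintype.card ι := by simp

theorem Real.sum_log_sub_self_eq_iff (hf : ∀ i, 0 < f i) :
    ∑ i, (Real.log (f i) - f i) = -Fintype.card ι ↔ f = 1 := by
  have hsum : -(Fintype.card ι : ℝ) = ∑ _i : ι, (-1 : ℝ) := by simp
  rw [hsum, Finset.sum_eq_sum_iff_of_le fun i _ => Real.log_sub_self_le_neg_one (hf i)]
  simp [funext_iff, Real.log_sub_self_eq_neg_one_iff (hf _)]

end

namespace Matrix

section RCLike

variable {n 𝕜 : Type*} [Fintype n] [DecidableEq n] [RCLike 𝕜] {A B : Matrix n n 𝕜}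

theorem IsHermitian.eq_one_of_eigenvalues_eq_one (hA : A.IsHermitian)
    (h : hA.eigenvalues = 1) : A = 1 := by
  rw [hA.spectral_theorem, h]
  simp

theorem PosDef.log_det_re_sub_trace_re_eq_sum (hA : A.PosDef) :
    Real.log (RCLike.re A.det) - RCLike.re A.trace =
      ∑ i, (Real.log (hA.1.eigenvalues i) - hA.1.eigenvalues i) := by
  rw [hA.1.det_eq_prod_eigenvalues, hA.1.trace_eq_sum_eigenvalues, ← RCLike.ofReal_prod,
    ← RCLike.ofReal_sum, RCLike.ofReal_re, RCLike.ofReal_re,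
    Real.log_prod fun i _ => (hA.eigenvalues_pos i).ne', Finset.sum_sub_distrib]

theorem PosDef.log_det_re_sub_trace_re_le (hA : A.PosDef) :
    Real.log (RCLike.re A.det) - RCLike.re A.trace ≤ -Fintype.card n := by
  rw [hA.log_det_re_sub_trace_re_eq_sum]
  exact Real.sum_log_sub_self_le hA.eigenvalues_pos

theorem PosDef.log_det_re_sub_trace_re_eq_iff (hA : A.PosDef) :
    Real.log (RCLike.re A.det) - RCLike.re A.trace = -Fintype.card n ↔ A = 1 := by
  refine ⟨fun h => ?_, fun h => by simp [h]⟩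
  rw [hA.log_det_re_sub_trace_re_eq_sum, Real.sum_log_sub_self_eq_iff hA.eigenvalues_pos] at h
  exact hA.1.eq_one_of_eigenvalues_eq_one h

theorem PosDef.log_re_det_mul_det (hA : A.PosDef) (hB : B.PosDef) :
    Real.log (RCLike.re (A.det * B.det)) =
      Real.log (RCLike.re A.det) + Real.log (RCLike.re B.det) := by
  obtain ⟨hAre, hAim⟩ := RCLike.pos_iff.mp hA.det_pos
  obtain ⟨hBre, hBim⟩ := RCLike.pos_iff.mp hB.det_pos
  rw [RCLike.mul_re, hAim, zero_mul, sub_zero, Real.log_mul hAre.ne' hBre.ne']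

end RCLike

section StarRing

variable {n R : Type*} [Fintype n] [DecidableEq n] [CommRing R] [StarRing R]

theorem det_mul_mul_conjTranspose (U C : Matrix n n R) :
    (U * C * Uᴴ).det = (Uᴴ * U).det * C.det := by
  rw [det_mul, det_mul, det_mul]
  ring

theorem mul_mul_conjTranspose_eq_one_iff {U C : Matrix n n R} (hC : IsUnit C.det) :
    U * C * Uᴴ = 1 ↔ Uᴴ * U = C⁻¹ := by
  rw [mul_assoc, mul_eq_one_comm, mul_assoc]
  exact ⟨fun h => (inv_eq_right_inv h).symm, fun h => by rw [h, mul_nonsing_inv _ hC]⟩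

end StarRing

end Matrix

theorem logdet_trace_inequality_general
    (K : ℕ)
    (C : Matrix (Fin K) (Fin K) ℂ) (hC : C.PosDef)
    (U : Matrix (Fin K) (Fin K) ℂ) (hU : IsUnit U.det) :
    (Real.log ((Uᴴ * U).det.re) - (Matrix.trace (U * C * Uᴴ)).re ≤
      -Real.log (C.det.re) - K) ∧
    (Real.log ((Uᴴ * U).det.re) - (Matrix.trace (U * C * Uᴴ)).re =
        -Real.log (C.det.re) - K ↔ Uᴴ * U = C⁻¹) := by
  have hUunit : IsUnit U := (isUnit_iff_isUnit_det U).mpr hU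
  have hB : (U * C * Uᴴ).PosDef := (IsUnit.posDef_star_right_conjugate_iff hUunit).mpr hC
  have hUU : (Uᴴ * U).PosDef := .conjTranspose_mul_self U (mulVec_injective_of_isUnit hUunit)
  have hlog := hUU.log_re_det_mul_det hC
  have hle := hB.log_det_re_sub_trace_re_le
  have heq := hB.log_det_re_sub_trace_re_eq_iff
  rw [← det_mul_mul_conjTranspose] at hlog
  simp only [RCLike.re_to_complex, Fintype.card_fin] at hlog hle heq
  refine ⟨by linarith, ?_⟩
  rw [← mul_mul_conjTranspose_eq_one_iff ((isUnit_iff_isUnit_det C).mp hC.isUnit), ← heq]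
  constructor <;> intro h <;> linarith

/-- For a Hermitian positive definite `C` and any invertible `U`,
`log det(U†U) − Tr(UCU†) ≤ −log det(C) − K`, with equality iff `U†U = C⁻¹`. -/
theorem logdet_trace_inequality
    (K : ℕ) (hK : 1 ≤ K)
    (C : Matrix (Fin K) (Fin K) ℂ) (hC : C.PosDef)
    (U : Matrix (Fin K) (Fin K) ℂ) (hU : IsUnit U.det) :
    (Real.log ((Uᴴ * U).det.re) - (Matrix.trace (U * C * Uᴴ)).re ≤
      -Real.log (C.det.re) - K) ∧
    (Real.log ((Uᴴ * U).det.re) - (Matrix.trace (U * C * Uᴴ)).re =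
        -Real.log (C.det.re) - K ↔ Uᴴ * U = C⁻¹) :=
  logdet_trace_inequality_general K C hC U hU
end

section
/- Let n ≥ 1, let A be an n×n Hermitian positive definite complex matrix, and let d ∈ ℂⁿ. Then ∫_{ℂⁿ} exp( 2·Re(d† c) − c† A c ) dc = (πⁿ / det A) · exp( d† A⁻¹ d ), where the integral is with respect to Lebesgue measure on ℂⁿ identified with ℝ^{2n} (note that d†A⁻¹d is a nonnegative real and det A a positive real, so both sides are positive reals). -/
/-!
Factor `A = Bᴴ * B` with `B` invertible. The substitution `u = B c` turns `c† A c` into `u† u`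
and `d† c` into `e† u` with `e = (Bᴴ)⁻¹ d`, so that `e† e = d† A⁻¹ d`. As a real-linear map of
`ℂⁿ ≅ ℝ²ⁿ`, `c ↦ B c` has determinant `|det B|² = det A`, the Jacobian of the substitution.
The remaining integral splits over the coordinates into one-dimensional Gaussians
`∫_ℂ exp (2 Re (ē z) - |z|²) dz = π exp |e|²`.
-/

open Matrix MeasureTheory Complex
open scoped ComplexOrder

theorem integral_exp_two_re_star_mul_sub_normSq (e : ℂ) :
    ∫ z : ℂ, Real.exp (2 * (star e * z).re - normSq z) = Real.pi * Real.exp (normSq e) := by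
  have h := GaussianFourier.integral_cexp_neg_mul_sq_norm_add (V := ℂ) (b := 1) (by simp) 2 e
  norm_num [Complex.finrank_real_complex, Complex.inner] at h
  have hz (z : ℂ) : (Real.exp (2 * (star e * z).re - normSq z) : ℂ)
      = cexp (-‖z‖ ^ 2 + 2 * (z.re * e.re + z.im * e.im)) := by
    simp only [ofReal_exp, star_def, mul_re, conj_re, conj_im, normSq_eq_norm_sq]
    push_cast
    ring_nf
  apply Complex.ofReal_injective
  rw [← integral_complex_ofReal]
  simp_rw [hz]
  rw [h]
  simp [normSq_eq_norm_sq]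

theorem re_star_dotProduct_self {ι : Type*} [Fintype ι] (u : ι → ℂ) :
    (star u ⬝ᵥ u).re = ∑ i, normSq (u i) := by
  simp [dotProduct, re_sum, normSq_apply]

theorem integral_exp_two_re_star_dotProduct_sub {ι : Type*} [Fintype ι] (e : ι → ℂ) :
    ∫ u : ι → ℂ, Real.exp (2 * (star e ⬝ᵥ u).re - (star u ⬝ᵥ u).re)
      = Real.pi ^ Fintype.card ι * Real.exp ((star e ⬝ᵥ e).re) := by
  have hprod (u : ι → ℂ) : Real.exp (2 * (star e ⬝ᵥ u).re - (star u ⬝ᵥ u).re)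
      = ∏ i, Real.exp (2 * (star (e i) * u i).re - normSq (u i)) := by
    rw [← Real.exp_sum, Finset.sum_sub_distrib, ← Finset.mul_sum, re_star_dotProduct_self]
    simp only [dotProduct, re_sum, Pi.star_apply]
  simp_rw [hprod]
  rw [integral_fintype_prod_volume_eq_prod
    (fun i z => Real.exp (2 * (star (e i) * z).re - normSq z))]
  simp_rw [integral_exp_two_re_star_mul_sub_normSq,
    Finset.prod_mul_distrib, Finset.prod_const, ← Real.exp_sum, re_star_dotProduct_self,
    Finset.card_univ]

theorem MeasureTheory.Measure.integral_comp_linearEquiv {E F : Type*} [NormedAddCommGroup E]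
    [NormedSpace ℝ E] [MeasurableSpace E] [BorelSpace E] [FiniteDimensional ℝ E]
    [NormedAddCommGroup F] [NormedSpace ℝ F] (μ : Measure E) [μ.IsAddHaarMeasure]
    (f : E ≃ₗ[ℝ] E) (g : E → F) :
    ∫ x, g (f x) ∂μ = |LinearMap.det (f : E →ₗ[ℝ] E)|⁻¹ • ∫ x, g x ∂μ := by
  have hf : MeasurableEmbedding f :=
    f.toContinuousLinearEquiv.toHomeomorph.measurableEmbedding
  rw [← hf.integral_map, ← f.coe_coe,
    Measure.map_linearMap_addHaar_eq_smul_addHaar μ f.isUnit_det'.ne_zero,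
    integral_smul_measure, ENNReal.toReal_ofReal (abs_nonneg _), abs_inv]

theorem integral_comp_complex_mulVec {ι F : Type*} [Fintype ι] [DecidableEq ι]
    [NormedAddCommGroup F] [NormedSpace ℝ F] (B : Matrix ι ι ℂ) (hB : IsUnit B.det)
    (g : (ι → ℂ) → F) :
    ∫ c, g (B *ᵥ c) = (normSq B.det)⁻¹ • ∫ c, g c := by
  let f : (ι → ℂ) ≃ₗ[ℝ] ι → ℂ :=
    (B.toLinearEquiv' (B.invertibleOfIsUnitDet hB)).restrictScalars ℝ
  have hdet : LinearMap.det (f : (ι → ℂ) →ₗ[ℝ] ι → ℂ) = normSq B.det := by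
    change LinearMap.det ((Matrix.toLin' B).restrictScalars ℝ) = _
    rw [LinearMap.det_restrictScalars, LinearMap.det_toLin', Algebra.norm_complex_apply]
  rw [← abs_of_nonneg (normSq_nonneg B.det), ← hdet,
    ← Measure.integral_comp_linearEquiv volume f g]
  rfl

theorem integral_exp_two_re_star_dotProduct_sub_conjTranspose_mul_self {ι : Type*} [Fintype ι]
    [DecidableEq ι] (B : Matrix ι ι ℂ) (hB : IsUnit B.det) (d : ι → ℂ) :
    ∫ c : ι → ℂ, Real.exp (2 * (star d ⬝ᵥ c).re - (star c ⬝ᵥ (Bᴴ * B) *ᵥ c).re)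
      = Real.pi ^ Fintype.card ι / normSq B.det
        * Real.exp ((star d ⬝ᵥ (Bᴴ * B)⁻¹ *ᵥ d).re) := by
  set e := Bᴴ⁻¹ *ᵥ d
  have hlin (c : ι → ℂ) : star d ⬝ᵥ c = star e ⬝ᵥ B *ᵥ c := by
    rw [star_mulVec, ← conjTranspose_nonsing_inv, conjTranspose_conjTranspose,
      ← dotProduct_mulVec, mulVec_mulVec, nonsing_inv_mul _ hB, one_mulVec]
  have hquad (c : ι → ℂ) : star c ⬝ᵥ (Bᴴ * B) *ᵥ c = star (B *ᵥ c) ⬝ᵥ B *ᵥ c := by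
    rw [star_mulVec, ← dotProduct_mulVec, mulVec_mulVec]
  have hinv : star d ⬝ᵥ (Bᴴ * B)⁻¹ *ᵥ d = star e ⬝ᵥ e := by
    rw [Matrix.mul_inv_rev, ← mulVec_mulVec, hlin, mulVec_mulVec, mul_nonsing_inv _ hB,
      one_mulVec]
  rw [hinv]
  simp_rw [hlin, hquad]
  rw [integral_comp_complex_mulVec B hB
      fun u => Real.exp (2 * (star e ⬝ᵥ u).re - (star u ⬝ᵥ u).re),
    integral_exp_two_re_star_dotProduct_sub, smul_eq_mul]
  ring

theorem Matrix.PosDef.exists_eq_conjTranspose_mul_self {ι 𝕜 : Type*} [Fintype ι] [DecidableEq ι]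
    [RCLike 𝕜] {A : Matrix ι ι 𝕜} (hA : A.PosDef) :
    ∃ B : Matrix ι ι 𝕜, IsUnit B.det ∧ A = Bᴴ * B := by
  open scoped MatrixOrder in
  obtain ⟨B, rfl⟩ := CStarAlgebra.nonneg_iff_eq_star_mul_self.mp hA.posSemidef.nonneg
  have hdet := (Matrix.isUnit_iff_isUnit_det _).mp hA.isUnit
  rw [det_mul] at hdet
  exact ⟨B, isUnit_of_mul_isUnit_right hdet, rfl⟩

theorem complex_gaussian_integral_general
    (n : ℕ)
    (A : Matrix (Fin n) (Fin n) ℂ) (hA : A.PosDef) (d : Fin n → ℂ) :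
    (∫ c : Fin n → ℂ,
        Real.exp (2 * ((star d) ⬝ᵥ c).re - ((star c) ⬝ᵥ A.mulVec c).re)) =
      Real.pi ^ n / A.det.re * Real.exp (((star d) ⬝ᵥ A⁻¹.mulVec d).re) := by
  obtain ⟨B, hB, rfl⟩ := hA.exists_eq_conjTranspose_mul_self
  have hdet : (Bᴴ * B).det.re = normSq B.det := by
    rw [det_mul, det_conjTranspose, Complex.star_def, ← normSq_eq_conj_mul_self, ofReal_re]
  rw [integral_exp_two_re_star_dotProduct_sub_conjTranspose_mul_self B hB d, Fintype.card_fin,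
    hdet]

/-- Complex Gaussian integral: for Hermitian positive definite `A`
and `d ∈ ℂⁿ`, `∫_{ℂⁿ} exp(2Re(d†c) − c†Ac) dc = (πⁿ/det A)·exp(d†A⁻¹d)`. -/
theorem complex_gaussian_integral
    (n : ℕ) (hn : 1 ≤ n)
    (A : Matrix (Fin n) (Fin n) ℂ) (hA : A.PosDef) (d : Fin n → ℂ) :
    (∫ c : Fin n → ℂ,
        Real.exp (2 * ((star d) ⬝ᵥ c).re - ((star c) ⬝ᵥ A.mulVec c).re)) =
      Real.pi ^ n / A.det.re * Real.exp (((star d) ⬝ᵥ A⁻¹.mulVec d).re) :=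
  complex_gaussian_integral_general n A hA d
end

section
/- Let X and S be finite nonempty sets, let N ≥ 1, and for k = 0,…,N−1 let Λ_k : X × S × S → ℝ≥0 (branch metrics) and P_k : X → ℝ≥0 (priors). For c = (c₀,…,c_{N−1}) ∈ X^N and σ = (σ₀,…,σ_N) ∈ S^{N+1}, define the trellis weight W(c,σ) = ∏_{k=0}^{N−1} Λ_k(c_k, σ_k, σ_{k+1}) · P_k(c_k). Define the forward messages by α₀(s) = 1 for all s ∈ S and α_{k+1}(s') = ∑_{c∈X} ∑_{s∈S} α_k(s) Λ_k(c, s, s') P_k(c), and the backward messages by β_N(s) = 1 for all s ∈ S and β_k(s) = ∑_{c∈X} ∑_{s'∈S} β_{k+1}(s') Λ_k(c, s, s') P_k(c). Then for every k ∈ {0,…,N−1} and every x ∈ X, the BCJR completion formula computes the exact marginal: P_k(x) · ∑_{s∈S} ∑_{s'∈S} α_k(s) Λ_k(x, s, s') β_{k+1}(s') = ∑_{c ∈ X^N with c_k = x} ∑_{σ ∈ S^{N+1}} W(c,σ). -/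
open scoped BigOperators NNReal

/-!
Summing out the symbols turns the trellis weight into a path sum of transfer matrices
`M_j = ∑_c Λ_j(c) P_j(c)`, where pinning `c_k = x` replaces `M_k` by `Λ_k(x) P_k(x)`; a path sum
with boundary weights `u`, `v` is `u ⬝ᵥ (M_0 ⋯ M_{N-1}) *ᵥ v`. The forward messages are the row
vectors `1 ᵥ* M_0 ⋯ M_{k-1}` and the backward ones the column vectors `M_{k+1} ⋯ M_{N-1} *ᵥ 1`, so
splitting the matrix product at `k` gives the completion formula.
-/

open Finset Matrix

section Messages

variable {S R : Type*} [Fintype S] [DecidableEq S] [Semiring R]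

theorem eq_vecMul_prod_take (L : List (Matrix S S R)) (a : ℕ → S → R) {m : ℕ}
    (hm : m ≤ L.length) (ha : ∀ j (hj : j < m), a (j + 1) = a j ᵥ* L[j]) :
    a m = a 0 ᵥ* (L.take m).prod := by
  induction m with
  | zero => simp
  | succ m ih =>
    rw [ha m (by omega), ih (by omega) fun j hj => ha j (by omega), List.take_add_one,
      List.getElem?_eq_getElem (by omega), Option.toList_some, List.prod_append,
      List.prod_singleton, vecMul_vecMul]

theorem eq_prod_drop_mulVec (L : List (Matrix S S R)) (b : ℕ → S → R) {m : ℕ}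
    (hm : m ≤ L.length) (hb : ∀ j (hj : j < L.length), m ≤ j → b j = L[j] *ᵥ b (j + 1)) :
    b m = (L.drop m).prod *ᵥ b L.length := by
  induction hm using Nat.decreasingInduction with
  | self => simp
  | of_succ m hm ih =>
    rw [hb m hm le_rfl, ih fun j hj hmj => hb j hj (by omega), List.drop_eq_getElem_cons hm,
      List.prod_cons, mulVec_mulVec]

theorem dotProduct_prod_mulVec_eq (L : List (Matrix S S R)) (a b : ℕ → S → R) {k : ℕ}
    (hk : k < L.length) (ha : ∀ j (hj : j < k), a (j + 1) = a j ᵥ* L[j])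
    (hb : ∀ j (hj : j < L.length), k < j → b j = L[j] *ᵥ b (j + 1)) :
    a 0 ⬝ᵥ (L.prod *ᵥ b L.length) = a k ⬝ᵥ (L[k] *ᵥ b (k + 1)) := by
  rw [eq_vecMul_prod_take L a hk.le ha, eq_prod_drop_mulVec L b hk hb,
    ← L.prod_take_mul_prod_drop k, List.drop_eq_getElem_cons hk, List.prod_cons]
  simp only [dotProduct_mulVec, vecMul_vecMul, mul_assoc]

theorem dotProduct_ofFn_prod_mulVec_eq {n : ℕ} (A : Fin n → Matrix S S R) (a b : ℕ → S → R)
    (k : Fin n) (ha : ∀ j : Fin n, j < k → a (j + 1) = a j ᵥ* A j)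
    (hb : ∀ j : Fin n, k < j → b j = A j *ᵥ b (j + 1)) :
    a 0 ⬝ᵥ ((List.ofFn A).prod *ᵥ b n) = a k ⬝ᵥ (A k *ᵥ b (k + 1)) := by
  simpa using dotProduct_prod_mulVec_eq (List.ofFn A) a b (k := k) (by simp)
    (fun j hj => by simpa using ha ⟨j, by omega⟩ hj)
    (fun j hj hkj => by simpa using hb ⟨j, by simpa using hj⟩ hkj)

end Messages

section Paths

variable {S R : Type*} [Fintype S] [DecidableEq S] [CommSemiring R]

theorem sum_paths_eq_dotProduct_ofFn_prod_mulVec (n : ℕ) (A : Fin n → Matrix S S R)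
    (u v : S → R) :
    ∑ σ : Fin (n + 1) → S, u (σ 0) * (∏ j, A j (σ j.castSucc) (σ j.succ)) * v (σ (Fin.last n)) =
      u ⬝ᵥ ((List.ofFn A).prod *ᵥ v) := by
  induction n generalizing u with
  | zero =>
    rw [← (Equiv.funUnique (Fin 1) S).symm.sum_comp]
    simp [dotProduct]
  | succ n ih =>
    rw [← (Fin.consEquiv fun _ => S).sum_comp, Fintype.sum_prod_type]
    simp only [Fin.consEquiv_apply, Fin.cons_zero, Fin.prod_univ_succ, Fin.castSucc_zero,
      Fin.cons_succ, ← Fin.succ_castSucc, ← Fin.succ_last, List.ofFn_succ, List.prod_cons]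
    rw [← mulVec_mulVec, dotProduct, Fintype.sum_congr _ _ fun s => ?_]
    rw [mulVec, ← ih, Finset.mul_sum]
    exact Fintype.sum_congr _ _ fun σ => by ring

end Paths

theorem sum_filter_apply_eq_prod_ite {ι κ R : Type*} [Fintype ι] [DecidableEq ι]
    [Fintype κ] [DecidableEq κ] [CommSemiring R] (f : ι → κ → R) (k : ι) (x : κ) :
    ∑ c ∈ univ.filter (fun c : ι → κ => c k = x), ∏ i, f i (c i) =
      ∏ i, if i = k then f i x else ∑ y, f i y := by
  let t : ι → Finset κ := Function.update (fun _ => univ) k {x}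
  calc _ = ∑ c ∈ Fintype.piFinset t, ∏ i, f i (c i) := by
        rw [Fintype.piFinset_update_singleton_eq_filter_piFinset_eq _ k (mem_univ x),
          Fintype.piFinset_univ (β := fun _ : ι => κ)]
    _ = _ := by
      rw [← prod_univ_sum]
      refine prod_congr rfl fun i _ => ?_
      by_cases hi : i = k
      · subst hi; simp [t]
      · simp [t, hi]

section Trellis

variable {X S R : Type*} [CommSemiring R] {N : ℕ}
  (Λ : Fin N → X → S → S → R) (P : Fin N → X → R)

def branchMatrix (k : Fin N) (c : X) : Matrix S S R :=
  Matrix.of fun s s' => Λ k c s s' * P k c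

def transferMatrix [Fintype X] (k : Fin N) : Matrix S S R :=
  ∑ c, branchMatrix Λ P k c

theorem vecMul_transferMatrix [Fintype X] [Fintype S] (k : Fin N) (a : S → R) (s' : S) :
    (a ᵥ* transferMatrix Λ P k) s' = ∑ c, ∑ s, a s * Λ k c s s' * P k c := by
  simp only [transferMatrix, branchMatrix, vecMul, dotProduct, Matrix.sum_apply, of_apply,
    Finset.mul_sum, mul_assoc]
  exact Finset.sum_comm

theorem transferMatrix_mulVec [Fintype X] [Fintype S] (k : Fin N) (b : S → R) (s : S) :
    (transferMatrix Λ P k *ᵥ b) s = ∑ c, ∑ s', b s' * Λ k c s s' * P k c := by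
  simp only [transferMatrix, branchMatrix, mulVec, dotProduct, Matrix.sum_apply, of_apply,
    Finset.sum_mul]
  rw [Finset.sum_comm]
  exact Fintype.sum_congr _ _ fun c => Fintype.sum_congr _ _ fun s' => by ring

theorem dotProduct_branchMatrix_mulVec [Fintype S] (k : Fin N) (x : X) (a b : S → R) :
    a ⬝ᵥ (branchMatrix Λ P k x *ᵥ b) = P k x * ∑ s, ∑ s', a s * Λ k x s s' * b s' := by
  simp only [dotProduct, mulVec, branchMatrix, of_apply, mul_sum]
  exact Fintype.sum_congr _ _ fun s => Fintype.sum_congr _ _ fun s' => by ring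

theorem update_transferMatrix_branchMatrix_apply [Fintype X] (k j : Fin N) (x : X) (s s' : S) :
    Function.update (transferMatrix Λ P) k (branchMatrix Λ P k x) j s s' =
      if j = k then Λ j x s s' * P j x else ∑ c, Λ j c s s' * P j c := by
  rw [Function.update_apply]
  split_ifs with hj
  · subst hj; rfl
  · simp [transferMatrix, branchMatrix, Matrix.sum_apply]

end Trellis

theorem bcjr_completion_exact_general
    (X S : Type) [Fintype X] [Fintype S] [DecidableEq X]
    (N : ℕ)
    (Λ : Fin N → X → S → S → ℝ≥0) (P : Fin N → X → ℝ≥0)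
    (α β : ℕ → S → ℝ≥0)
    (hα0 : ∀ s : S, α 0 s = 1)
    (hαrec : ∀ (k : Fin N) (s' : S),
      α (k + 1) s' = ∑ c : X, ∑ s : S, α k s * Λ k c s s' * P k c)
    (hβN : ∀ s : S, β N s = 1)
    (hβrec : ∀ (k : Fin N) (s : S),
      β k s = ∑ c : X, ∑ s' : S, β (k + 1) s' * Λ k c s s' * P k c) :
    ∀ (k : Fin N) (x : X),
      P k x * ∑ s : S, ∑ s' : S, α k s * Λ k x s s' * β (k + 1) s' =
        ∑ c ∈ Finset.univ.filter (fun c : Fin N → X => c k = x),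
          ∑ σ : Fin (N + 1) → S,
            ∏ j : Fin N, Λ j (c j) (σ j.castSucc) (σ j.succ) * P j (c j) := by
  intro k x
  classical
  set A := Function.update (transferMatrix Λ P) k (branchMatrix Λ P k x) with hA
  have hfwd : ∀ j : Fin N, j < k → α (j + 1) = α j ᵥ* A j := fun j hj => by
    ext s'
    rw [hA, Function.update_of_ne hj.ne, vecMul_transferMatrix, hαrec]
  have hbwd : ∀ j : Fin N, k < j → β j = A j *ᵥ β (j + 1) := fun j hj => by
    ext s
    rw [hA, Function.update_of_ne hj.ne', transferMatrix_mulVec, hβrec]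
  have hAk : A k = branchMatrix Λ P k x := Function.update_self ..
  rw [← dotProduct_branchMatrix_mulVec, ← hAk, ← dotProduct_ofFn_prod_mulVec_eq A α β k hfwd hbwd,
    (funext hα0 : α 0 = 1), (funext hβN : β N = 1), sum_comm,
    ← sum_paths_eq_dotProduct_ofFn_prod_mulVec]
  refine Fintype.sum_congr _ _ fun σ => ?_
  simp only [Pi.one_apply, one_mul, mul_one, hA, update_transferMatrix_branchMatrix_apply]
  exact (sum_filter_apply_eq_prod_ite
    (fun j c => Λ j c (σ j.castSucc) (σ j.succ) * P j c) k x).symm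

/-- Correctness of the BCJR completion step: the forward/backward
messages combine to compute the exact marginal of the trellis weight. -/
theorem bcjr_completion_exact
    (X S : Type) [Fintype X] [Fintype S] [DecidableEq X]
    [Nonempty X] [Nonempty S]
    (N : ℕ) (hN : 1 ≤ N)
    (Λ : Fin N → X → S → S → ℝ≥0) (P : Fin N → X → ℝ≥0)
    (α β : ℕ → S → ℝ≥0)
    (hα0 : ∀ s : S, α 0 s = 1)
    (hαrec : ∀ (k : Fin N) (s' : S),
      α (k + 1) s' = ∑ c : X, ∑ s : S, α k s * Λ k c s s' * P k c)
    (hβN : ∀ s : S, β N s = 1)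
    (hβrec : ∀ (k : Fin N) (s : S),
      β k s = ∑ c : X, ∑ s' : S, β (k + 1) s' * Λ k c s s' * P k c) :
    ∀ (k : Fin N) (x : X),
      P k x * ∑ s : S, ∑ s' : S, α k s * Λ k x s s' * β (k + 1) s' =
        ∑ c ∈ Finset.univ.filter (fun c : Fin N → X => c k = x),
          ∑ σ : Fin (N + 1) → S,
            ∏ j : Fin N, Λ j (c j) (σ j.castSucc) (σ j.succ) * P j (c j) :=
  bcjr_completion_exact_general X S N Λ P α β hα0 hαrec hβN hβrec
end
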